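/- Let T₁, T₂, T₃, T₄ be mutually commuting normal bounded operators on a Hilbert space H and T = [[T₁, T₂],[T₃, T₄]] on H ⊕ H. Set t₁ = T₁*T₁ + T₃*T₃, t₂ = T₁*T₂ + T₃*T₄, t₃ = T₂*T₂ + T₄*T₄, s₁ = T₁T₁* + T₂T₂*, s₂ = T₁T₃* + T₂T₄*, s₃ = T₃T₃* + T₄T₄*. Then T is binormal if and only if (s₂t₂*)* = s₂t₂*, (s₂*t₂)* = s₂*t₂, and t₁s₂ + t₂s₃ = s₁t₂ + s₂t₃. -/

import Mathlib

/-!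
Writing `T` as the operator matrix `[[T₁, T₂], [T₃, T₄]]`, one finds `T*T = [[t₁, t₂], [t₂*, t₃]]`
and `TT* = [[s₁, s₂], [s₂*, s₃]]`, so binormality is four operator equations between the entries.
By the Fuglede–Putnam theorem every `Tᵢ*Tᵢ` commutes with every `TⱼTⱼ*`; hence `t₁s₁ = s₁t₁` and
`t₃s₃ = s₃t₃`, and the two diagonal equations collapse to `t₂s₂* = s₂t₂*` and `t₂*s₂ = s₂*t₂`.
The lower off-diagonal equation is the adjoint of the upper one.
-/

open ContinuousLinearMap

/-- A bounded operator `T` is binormal if `T*T` commutes with `TT*`. -/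
def Binormal {E : Type*} [NormedAddCommGroup E] [InnerProductSpace ℂ E] [CompleteSpace E]
    (T : E →L[ℂ] E) : Prop :=
  (adjoint T * T) * (T * adjoint T) = (T * adjoint T) * (adjoint T * T)

lemma commute_star_mul_self_mul_star {A : Type*} [NonUnitalCStarAlgebra A] {a b : A}
    (ha : IsStarNormal a) (hb : IsStarNormal b) (hab : Commute a b) :
    Commute (star a * a) (b * star b) :=
  ((ha.commute_star_left hab).mul_right hab.star_star).mul_left
    (hab.mul_right (hb.commute_star_right hab))

lemma commute_star_mul_self_add_mul_star_add {A : Type*} [NonUnitalCStarAlgebra A] {a b c d : A}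
    (ha : IsStarNormal a) (hb : IsStarNormal b) (hc : IsStarNormal c) (hd : IsStarNormal d)
    (hac : Commute a c) (had : Commute a d) (hbc : Commute b c) (hbd : Commute b d) :
    Commute (star a * a + star b * b) (c * star c + d * star d) :=
  ((commute_star_mul_self_mul_star ha hc hac).add_right
      (commute_star_mul_self_mul_star ha hd had)).add_left
    ((commute_star_mul_self_mul_star hb hc hbc).add_right
      (commute_star_mul_self_mul_star hb hd hbd))

lemma commute_selfAdjoint_blocks_iff {R : Type*} [Ring R] [StarRing R]
    {t₁ t₂ t₃ s₁ s₂ s₃ : R} (ht₁ : IsSelfAdjoint t₁) (ht₃ : IsSelfAdjoint t₃)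
    (hs₁ : IsSelfAdjoint s₁) (hs₃ : IsSelfAdjoint s₃) (h₁ : Commute t₁ s₁) (h₃ : Commute t₃ s₃) :
    (t₁ * s₁ + t₂ * star s₂ = s₁ * t₁ + s₂ * star t₂ ∧
      t₁ * s₂ + t₂ * s₃ = s₁ * t₂ + s₂ * t₃ ∧
      star t₂ * s₁ + t₃ * star s₂ = star s₂ * t₁ + s₃ * star t₂ ∧
      star t₂ * s₂ + t₃ * s₃ = star s₂ * t₂ + s₃ * t₃) ↔
    (IsSelfAdjoint (s₂ * star t₂) ∧ IsSelfAdjoint (star s₂ * t₂) ∧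
      t₁ * s₂ + t₂ * s₃ = s₁ * t₂ + s₂ * t₃) := by
  have e₁ : t₁ * s₁ + t₂ * star s₂ = s₁ * t₁ + s₂ * star t₂ ↔ IsSelfAdjoint (s₂ * star t₂) := by
    rw [h₁.eq, add_right_inj, IsSelfAdjoint, star_mul, star_star]
  have e₄ : star t₂ * s₂ + t₃ * s₃ = star s₂ * t₂ + s₃ * t₃ ↔ IsSelfAdjoint (star s₂ * t₂) := by
    rw [h₃.eq, add_left_inj, IsSelfAdjoint, star_mul, star_star]
  have e₃ : star t₂ * s₁ + t₃ * star s₂ = star s₂ * t₁ + s₃ * star t₂ ↔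
      t₁ * s₂ + t₂ * s₃ = s₁ * t₂ + s₂ * t₃ := by
    rw [← star_inj]
    simp only [star_add, star_mul, star_star, ht₁.star_eq, ht₃.star_eq, hs₁.star_eq, hs₃.star_eq]
    exact eq_comm
  rw [e₁, e₃, e₄]
  tauto

section BlockOperator

variable {𝕜 E : Type*} [NontriviallyNormedField 𝕜] [NormedAddCommGroup E] [NormedSpace 𝕜 E]

noncomputable def blockOperator (A B C D : E →L[𝕜] E) : WithLp 2 (E × E) →L[𝕜] WithLp 2 (E × E) :=
  (WithLp.prodContinuousLinearEquiv 2 𝕜 E E).symm.toContinuousLinearMap ∘L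
    (A.coprod B).prod (C.coprod D) ∘L
      (WithLp.prodContinuousLinearEquiv 2 𝕜 E E).toContinuousLinearMap

@[simp]
lemma ofLp_blockOperator_apply (A B C D : E →L[𝕜] E) (x : WithLp 2 (E × E)) :
    (blockOperator A B C D x).ofLp = (A x.ofLp.1 + B x.ofLp.2, C x.ofLp.1 + D x.ofLp.2) :=
  rfl

lemma blockOperator_mul (A B C D A' B' C' D' : E →L[𝕜] E) :
    blockOperator A B C D * blockOperator A' B' C' D' =
      blockOperator (A * A' + B * C') (A * B' + B * D') (C * A' + D * C') (C * B' + D * D') := by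
  ext1 x
  apply WithLp.ofLp_injective
  simp only [mul_apply_eq_comp, ofLp_blockOperator_apply, add_apply, map_add, Prod.mk.injEq]
  constructor <;> abel

lemma blockOperator_inj {A B C D A' B' C' D' : E →L[𝕜] E} :
    blockOperator A B C D = blockOperator A' B' C' D' ↔ A = A' ∧ B = B' ∧ C = C' ∧ D = D' := by
  refine ⟨fun h => ?_, by rintro ⟨rfl, rfl, rfl, rfl⟩; rfl⟩
  have col₁ (x : E) := congr_arg WithLp.ofLp congr($h (WithLp.toLp 2 (x, 0)))
  have col₂ (x : E) := congr_arg WithLp.ofLp congr($h (WithLp.toLp 2 (0, x)))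
  simp only [ofLp_blockOperator_apply, map_zero, add_zero, zero_add, Prod.mk.injEq] at col₁ col₂
  exact ⟨ext fun x => (col₁ x).1, ext fun x => (col₂ x).1, ext fun x => (col₁ x).2,
    ext fun x => (col₂ x).2⟩

lemma commute_blockOperator_iff {A B C D A' B' C' D' : E →L[𝕜] E} :
    Commute (blockOperator A B C D) (blockOperator A' B' C' D') ↔
      (A * A' + B * C' = A' * A + B' * C ∧ A * B' + B * D' = A' * B + B' * D ∧
        C * A' + D * C' = C' * A + D' * C ∧ C * B' + D * D' = C' * B + D' * D) := by
  rw [Commute, SemiconjBy, blockOperator_mul, blockOperator_mul, blockOperator_inj]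

end BlockOperator

section BlockOperatorAdjoint

variable {𝕜 E : Type*} [RCLike 𝕜] [NormedAddCommGroup E] [InnerProductSpace 𝕜 E]
  [CompleteSpace E]

lemma star_blockOperator (A B C D : E →L[𝕜] E) :
    star (blockOperator A B C D) = blockOperator (star A) (star C) (star B) (star D) := by
  simp only [star_eq_adjoint]
  refine ((eq_adjoint_iff _ _).2 fun x y => ?_).symm
  simp only [WithLp.prod_inner_apply, ofLp_blockOperator_apply, inner_add_left, inner_add_right,
    adjoint_inner_left]
  ring

lemma star_blockOperator_mul_self (A B C D : E →L[𝕜] E) :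
    star (blockOperator A B C D) * blockOperator A B C D =
      blockOperator (star A * A + star C * C) (star A * B + star C * D)
        (star (star A * B + star C * D)) (star B * B + star D * D) := by
  rw [star_blockOperator, blockOperator_mul, star_add, star_mul, star_mul, star_star, star_star]

lemma blockOperator_mul_star_self (A B C D : E →L[𝕜] E) :
    blockOperator A B C D * star (blockOperator A B C D) =
      blockOperator (A * star A + B * star B) (A * star C + B * star D)
        (star (A * star C + B * star D)) (C * star C + D * star D) := by
  rw [star_blockOperator, blockOperator_mul, star_add, star_mul, star_mul, star_star, star_star]

end BlockOperatorAdjoint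

theorem stmt_15 {H : Type*}
    [NormedAddCommGroup H] [InnerProductSpace ℂ H] [CompleteSpace H]
    (T₁ T₂ T₃ T₄ : H →L[ℂ] H)
    (hnormal : ∀ S ∈ ({T₁, T₂, T₃, T₄} : Set (H →L[ℂ] H)), adjoint S * S = S * adjoint S)
    (hcomm : ∀ S ∈ ({T₁, T₂, T₃, T₄} : Set (H →L[ℂ] H)),
      ∀ R ∈ ({T₁, T₂, T₃, T₄} : Set (H →L[ℂ] H)), S * R = R * S)
    (T : WithLp 2 (H × H) →L[ℂ] WithLp 2 (H × H))
    (hT : ∀ x : WithLp 2 (H × H),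
      WithLp.equiv 2 (H × H) (T x) =
        (T₁ (WithLp.equiv 2 (H × H) x).1 + T₂ (WithLp.equiv 2 (H × H) x).2,
         T₃ (WithLp.equiv 2 (H × H) x).1 + T₄ (WithLp.equiv 2 (H × H) x).2))
    (t₁ t₂ t₃ s₁ s₂ s₃ : H →L[ℂ] H)
    (ht₁ : t₁ = adjoint T₁ * T₁ + adjoint T₃ * T₃)
    (ht₂ : t₂ = adjoint T₁ * T₂ + adjoint T₃ * T₄)
    (ht₃ : t₃ = adjoint T₂ * T₂ + adjoint T₄ * T₄)
    (hs₁ : s₁ = T₁ * adjoint T₁ + T₂ * adjoint T₂)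
    (hs₂ : s₂ = T₁ * adjoint T₃ + T₂ * adjoint T₄)
    (hs₃ : s₃ = T₃ * adjoint T₃ + T₄ * adjoint T₄) :
    Binormal T ↔
      (adjoint (s₂ * adjoint t₂) = s₂ * adjoint t₂ ∧
       adjoint (adjoint s₂ * t₂) = adjoint s₂ * t₂ ∧
       t₁ * s₂ + t₂ * s₃ = s₁ * t₂ + s₂ * t₃) := by
  rw [Binormal, ← commute_iff_eq]
  simp only [← star_eq_adjoint] at hnormal ht₁ ht₂ ht₃ hs₁ hs₂ hs₃ ⊢
  subst ht₁ ht₂ ht₃ hs₁ hs₂ hs₃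
  set Ts : Set (H →L[ℂ] H) := {T₁, T₂, T₃, T₄}
  obtain ⟨h₁, h₂, h₃, h₄⟩ : T₁ ∈ Ts ∧ T₂ ∈ Ts ∧ T₃ ∈ Ts ∧ T₄ ∈ Ts := by simp [Ts]
  have normal (S : H →L[ℂ] H) (hS : S ∈ Ts) : IsStarNormal S := ⟨hnormal S hS⟩
  have hTblock : T = blockOperator T₁ T₂ T₃ T₄ := ext fun x => WithLp.ofLp_injective 2 (hT x)
  rw [hTblock, star_blockOperator_mul_self, blockOperator_mul_star_self, commute_blockOperator_iff]
  exact commute_selfAdjoint_blocks_iff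
    ((IsSelfAdjoint.star_mul_self T₁).add (.star_mul_self T₃))
    ((IsSelfAdjoint.star_mul_self T₂).add (.star_mul_self T₄))
    ((IsSelfAdjoint.mul_star_self T₁).add (.mul_star_self T₂))
    ((IsSelfAdjoint.mul_star_self T₃).add (.mul_star_self T₄))
    (commute_star_mul_self_add_mul_star_add (normal _ h₁) (normal _ h₃) (normal _ h₁)
      (normal _ h₂) (hcomm _ h₁ _ h₁) (hcomm _ h₁ _ h₂) (hcomm _ h₃ _ h₁) (hcomm _ h₃ _ h₂))
    (commute_star_mul_self_add_mul_star_add (normal _ h₂) (normal _ h₄) (normal _ h₃)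
      (normal _ h₄) (hcomm _ h₂ _ h₃) (hcomm _ h₂ _ h₄) (hcomm _ h₄ _ h₃) (hcomm _ h₄ _ h₄))
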